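/- arXiv:2408.09165 — 2 statements merged into one kernel-verified Lean document; each statement's English description precedes it below -/
import Mathlib

section
/- Let k be a positive integer and let f : ℝ → ℝ be continuously differentiable on an open interval containing [t, t+ks], where t ∈ ℝ and s > 0. Then the derivative of the forward difference with respect to the increment satisfies ∂/∂s (Δ_s^k(f,t)) = k · Δ_s^{k−1}(f', t+s), where f' denotes the derivative of f. -/
open MeasureTheory Real Set

/-- The `k`-th order forward difference of `f` starting at `t` with increment `s`:
`Δ_s^k(f,t) = Σ_{j=0}^k C(k,j) (−1)^j f(t+(k−j)s)`. -/
noncomputable def fdiff (f : ℝ → ℝ) (k : ℕ) (s t : ℝ) : ℝ :=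
  ∑ j ∈ Finset.range (k + 1), (k.choose j : ℝ) * (-1) ^ j * f (t + ((k - j : ℕ) : ℝ) * s)

theorem forward_difference_deriv_in_increment
    (k : ℕ) (hk : 0 < k) (f : ℝ → ℝ) (t s : ℝ) (hs : 0 < s)
    (U : Set ℝ) (hU : IsOpen U) (hsub : Set.Icc t (t + (k : ℝ) * s) ⊆ U)
    (hf : ContDiffOn ℝ 1 f U) :
    HasDerivAt (fun u => fdiff f k u t)
      ((k : ℝ) * fdiff (deriv f) (k - 1) s (t + s)) s := by
  have hdiff : ∀ x ∈ U, HasDerivAt f (deriv f x) x := by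
    intro x hx
    exact ((hf.differentiableOn one_ne_zero).differentiableAt (hU.mem_nhds hx)).hasDerivAt
  have hmem : ∀ j, j ≤ k → t + ((k - j : ℕ) : ℝ) * s ∈ U := by
    intro j hj
    apply hsub
    have h0 : (0:ℝ) ≤ ((k - j : ℕ) : ℝ) := Nat.cast_nonneg _
    have h1 : ((k - j : ℕ) : ℝ) ≤ (k : ℝ) := by exact_mod_cast Nat.sub_le k j
    constructor <;> nlinarith
  have key : HasDerivAt (fun u => fdiff f k u t)
      (∑ j ∈ Finset.range (k+1),
        (k.choose j : ℝ) * (-1)^j * (((k-j:ℕ):ℝ) * deriv f (t + ((k-j:ℕ):ℝ)*s))) s := by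
    unfold fdiff
    apply HasDerivAt.fun_sum
    intro j hj
    have hj' : j ≤ k := Nat.lt_succ_iff.mp (Finset.mem_range.mp hj)
    have h1 : HasDerivAt (fun u : ℝ => t + ((k-j:ℕ):ℝ) * u) (((k-j:ℕ):ℝ)) s := by
      simpa using ((hasDerivAt_id s).const_mul (((k-j:ℕ):ℝ))).const_add t
    have h2 := (hdiff _ (hmem j hj')).comp s h1
    have h3 := h2.const_mul ((k.choose j : ℝ) * (-1)^j)
    simpa [Function.comp, mul_comm, mul_assoc, mul_left_comm] using h3
  convert key using 1
  unfold fdiff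
  have hk1 : k - 1 + 1 = k := Nat.succ_pred_eq_of_pos hk
  rw [Finset.mul_sum, hk1]
  conv_rhs => rw [Finset.sum_range_succ]
  have hz : ((k - k : ℕ) : ℝ) = 0 := by simp
  rw [hz]
  simp only [zero_mul, mul_zero, add_zero]
  apply Finset.sum_congr rfl
  intro j hj
  have hjk : j < k := Finset.mem_range.mp hj
  have hpoint : t + s + ((k - 1 - j : ℕ) : ℝ) * s = t + ((k - j : ℕ) : ℝ) * s := by
    have h1 : ((k - 1 - j : ℕ) : ℝ) = (k:ℝ) - 1 - j := by
      have : j ≤ k - 1 := Nat.le_pred_of_lt hjk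
      push_cast [Nat.sub_sub, this, Nat.one_add_le_iff.mpr hjk]
      ring
    have h2 : ((k - j : ℕ) : ℝ) = (k:ℝ) - j := by
      push_cast [Nat.le_of_lt hjk]
      ring
    rw [h1, h2]; ring
  rw [hpoint]
  have hchoose : (k:ℝ) * ((k-1).choose j : ℝ) = (k.choose j : ℝ) * ((k - j : ℕ) : ℝ) := by
    have h1 := Nat.add_one_mul_choose_eq (k-1) j
    simp only [Nat.succ_eq_add_one, hk1] at h1
    have h2 := Nat.choose_succ_right_eq k j
    exact_mod_cast h1.trans h2
  linear_combination ((-1:ℝ)^j * deriv f (t + ((k - j : ℕ) : ℝ) * s)) * hchoose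
end

section
/- Let δ ∈ ℝ and let k be a positive integer with δ < k. Suppose f : (0,∞) → ℝ is k times continuously differentiable and satisfies |f^{(k)}(r)| ≤ C r^{−k+δ} for all r > 0, where C ≥ 0. Then for all t > 0 and s > 0, the k-th order forward difference satisfies |Δ_s^k(f,t)| ≤ C s^k t^{−k+δ}. -/
open MeasureTheory Real Set

lemma iteratedDerivWithin_Ioi_eq (n : ℕ) (f : ℝ → ℝ) {x : ℝ} (hx : x ∈ Set.Ioi (0:ℝ)) :
    iteratedDerivWithin n f (Set.Ioi 0) x = iteratedDeriv n f x := by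
  simp only [iteratedDerivWithin_eq_iteratedFDerivWithin, iteratedDeriv_eq_iteratedFDeriv,
    iteratedFDerivWithin_of_isOpen n isOpen_Ioi hx]

lemma fdiff_succ (f : ℝ → ℝ) (k : ℕ) (s t : ℝ) :
    fdiff f (k+1) s t = fdiff (fun x => f (x + s) - f x) k s t := by
  unfold fdiff
  have hb : ∀ j ∈ Finset.range (k+1),
      (k.choose j : ℝ) * (-1) ^ j * f (t + (((k+1) - j : ℕ) : ℝ) * s)
      = (k.choose j : ℝ) * (-1) ^ j * f (t + ((k - j : ℕ) : ℝ) * s + s) := by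
    intro j hj
    rw [Finset.mem_range] at hj
    have h1 : (k+1) - j = (k - j) + 1 := by omega
    rw [h1]
    push_cast
    ring_nf
  calc ∑ j ∈ Finset.range (k + 1 + 1), ((k+1).choose j : ℝ) * (-1) ^ j * f (t + (((k+1) - j : ℕ) : ℝ) * s)
      = ((k+1).choose 0 : ℝ) * (-1)^0 * f (t + (((k+1) - 0 : ℕ) : ℝ) * s)
        + ∑ j ∈ Finset.range (k + 1), ((k+1).choose (j+1) : ℝ) * (-1) ^ (j+1) * f (t + (((k+1) - (j+1) : ℕ) : ℝ) * s) := by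
        rw [Finset.sum_range_succ']; ring
    _ = f (t + (((k+1) : ℕ) : ℝ) * s)
        + (∑ j ∈ Finset.range (k + 1), (k.choose (j+1) : ℝ) * (-1) ^ (j+1) * f (t + ((k - j : ℕ) : ℝ) * s)
          - ∑ j ∈ Finset.range (k + 1), (k.choose j : ℝ) * (-1) ^ j * f (t + ((k - j : ℕ) : ℝ) * s)) := by
        simp only [Nat.choose_succ_succ, Nat.choose_zero_right, Nat.add_sub_cancel_left,
          Nat.succ_sub_succ]
        rw [← Finset.sum_sub_distrib]
        push_cast
        congr 1
        · simp
        · apply Finset.sum_congr rfl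
          intro j hj
          ring
    _ = ∑ j ∈ Finset.range (k + 1), (k.choose j : ℝ) * (-1) ^ j * f (t + (((k+1) - j : ℕ) : ℝ) * s)
        - ∑ j ∈ Finset.range (k + 1), (k.choose j : ℝ) * (-1) ^ j * f (t + ((k - j : ℕ) : ℝ) * s) := by
        have h2 : ∑ j ∈ Finset.range (k + 1), (k.choose (j+1) : ℝ) * (-1) ^ (j+1) * f (t + ((k - j : ℕ) : ℝ) * s)
            = ∑ j ∈ Finset.range (k + 2), (k.choose j : ℝ) * (-1) ^ j * f (t + (((k+1) - j : ℕ) : ℝ) * s)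
              - f (t + (((k+1) : ℕ) : ℝ) * s) := by
          rw [Finset.sum_range_succ' (fun j => (k.choose j : ℝ) * (-1) ^ j * f (t + (((k+1) - j : ℕ) : ℝ) * s)) (k+1)]
          simp only [Nat.succ_sub_succ, Nat.choose_zero_right, Nat.sub_zero, pow_zero,
            Nat.cast_one]
          ring
        rw [h2, Finset.sum_range_succ]
        simp [Nat.choose_succ_self]
        ring
    _ = ∑ j ∈ Finset.range (k + 1), (k.choose j : ℝ) * (-1) ^ j * (f (t + ((k - j : ℕ) : ℝ) * s + s) - f (t + ((k - j : ℕ) : ℝ) * s)) := by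
        rw [Finset.sum_congr rfl hb, ← Finset.sum_sub_distrib]
        apply Finset.sum_congr rfl
        intro j hj
        ring

lemma key : ∀ (k : ℕ) (δ C : ℝ), 0 ≤ C → δ < k → ∀ f : ℝ → ℝ,
    ContDiffOn ℝ k f (Set.Ioi (0 : ℝ)) →
    (∀ r > (0 : ℝ), |iteratedDerivWithin k f (Set.Ioi 0) r| ≤ C * r ^ (δ - (k : ℝ))) →
    ∀ t > (0 : ℝ), ∀ s > (0 : ℝ), |fdiff f k s t| ≤ C * s ^ k * t ^ (δ - (k : ℝ)) := by
  intro k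
  induction k with
  | zero =>
    intro δ C hC hδ f hf hbound t ht s hs
    have := hbound t ht
    simpa [fdiff, iteratedDerivWithin_zero] using this
  | succ k IH =>
    intro δ C hC hδ f hf hbound t ht s hs
    set g : ℝ → ℝ := fun x => f (x + s) - f x with hg
    have hUD : UniqueDiffOn ℝ (Set.Ioi (0:ℝ)) := isOpen_Ioi.uniqueDiffOn
    have hshift : ContDiffOn ℝ (k+1) (fun x => f (x + s)) (Set.Ioi (0:ℝ)) := by
      have : ContDiffOn ℝ (k+1) (f ∘ (· + s)) (Set.Ioi (0:ℝ)) := by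
        apply hf.comp ((contDiff_id.add contDiff_const).contDiffOn)
        intro x hx
        simp only [Set.mem_Ioi, id_eq] at hx ⊢
        linarith
      exact this
    have hgk : ContDiffOn ℝ k g (Set.Ioi (0:ℝ)) := by
      have : ContDiffOn ℝ (k+1) g (Set.Ioi (0:ℝ)) := hshift.sub hf
      exact this.of_le (by exact_mod_cast Nat.le_succ k)
    -- bound on k-th derivative of g
    have hgbound : ∀ r > (0:ℝ), |iteratedDerivWithin k g (Set.Ioi 0) r| ≤ (C * s) * r ^ ((δ-1) - (k : ℝ)) := by
      intro r hr
      have hrs : r + s ∈ Set.Ioi (0:ℝ) := by simp only [Set.mem_Ioi]; linarith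
      have hrI : r ∈ Set.Ioi (0:ℝ) := hr
      have hsub : iteratedDerivWithin k g (Set.Ioi 0) r
          = iteratedDerivWithin k f (Set.Ioi 0) (r + s) - iteratedDerivWithin k f (Set.Ioi 0) r := by
        have h1 : iteratedDerivWithin k g (Set.Ioi 0) r
            = iteratedDerivWithin k (fun x => f (x + s)) (Set.Ioi 0) r
              - iteratedDerivWithin k f (Set.Ioi 0) r := by
          exact iteratedDerivWithin_sub hrI hUD
            (hshift.of_le (m := k) (by exact_mod_cast Nat.le_succ k) r hrI)
            (hf.of_le (m := k) (by exact_mod_cast Nat.le_succ k) r hrI)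
        rw [h1]
        congr 1
        rw [iteratedDerivWithin_Ioi_eq k _ hrI, iteratedDeriv_comp_add_const k f s]
        exact (iteratedDerivWithin_Ioi_eq k f hrs).symm
      rw [hsub]
      -- MVT on [r, r+s]
      set F : ℝ → ℝ := iteratedDerivWithin k f (Set.Ioi 0) with hF
      have hdiffOn : DifferentiableOn ℝ F (Set.Ioi (0:ℝ)) :=
        hf.differentiableOn_iteratedDerivWithin (by exact_mod_cast Nat.lt_succ_self k) hUD
      have hHD : ∀ x ∈ Set.Icc r (r+s), HasDerivWithinAt F
          (iteratedDerivWithin (k+1) f (Set.Ioi 0) x) (Set.Icc r (r+s)) x := by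
        intro x hx
        have hx0 : x ∈ Set.Ioi (0:ℝ) := lt_of_lt_of_le hr hx.1
        have hd : DifferentiableAt ℝ F x :=
          (hdiffOn x hx0).differentiableAt (isOpen_Ioi.mem_nhds hx0)
        have heq : iteratedDerivWithin (k+1) f (Set.Ioi 0) x = deriv F x := by
          rw [iteratedDerivWithin_succ, derivWithin_of_isOpen isOpen_Ioi hx0]
        rw [heq]
        exact hd.hasDerivAt.hasDerivWithinAt
      have hbd : ∀ x ∈ Set.Ico r (r+s), ‖iteratedDerivWithin (k+1) f (Set.Ioi 0) x‖ ≤ C * r ^ (δ - ((k:ℝ)+1)) := by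
        intro x hx
        have hx0 : (0:ℝ) < x := lt_of_lt_of_le hr hx.1
        have h1 := hbound x hx0
        have h2 : x ^ (δ - ((k:ℝ)+1)) ≤ r ^ (δ - ((k:ℝ)+1)) := by
          apply Real.rpow_le_rpow_of_nonpos hr hx.1
          push_cast at hδ ⊢
          linarith
        calc ‖iteratedDerivWithin (k+1) f (Set.Ioi 0) x‖
            ≤ C * x ^ (δ - ((k:ℝ)+1)) := by
              rw [Real.norm_eq_abs]
              convert h1 using 3
              push_cast
              ring
          _ ≤ C * r ^ (δ - ((k:ℝ)+1)) := by
              exact mul_le_mul_of_nonneg_left h2 hC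
      have hmvt := norm_image_sub_le_of_norm_deriv_le_segment' hHD hbd (r+s)
        (right_mem_Icc.2 (by linarith))
      rw [Real.norm_eq_abs] at hmvt
      calc |iteratedDerivWithin k f (Set.Ioi 0) (r + s) - iteratedDerivWithin k f (Set.Ioi 0) r|
          ≤ C * r ^ (δ - ((k:ℝ)+1)) * (r + s - r) := hmvt
        _ = (C * s) * r ^ ((δ-1) - (k : ℝ)) := by
            rw [show δ - ((k:ℝ)+1) = (δ-1) - (k:ℝ) by ring]
            ring
    have hIH := IH (δ-1) (C*s) (mul_nonneg hC hs.le) (by push_cast at hδ ⊢; linarith) g hgk hgbound t ht s hs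
    rw [fdiff_succ]
    calc |fdiff g k s t| ≤ (C*s) * s ^ k * t ^ ((δ-1) - (k:ℝ)) := hIH
      _ = C * s ^ (k+1) * t ^ (δ - ((k:ℕ)+1:ℝ)) := by
          rw [show (δ-1) - (k:ℝ) = δ - ((k:ℕ)+1:ℝ) by ring]
          ring
      _ = C * s ^ (k+1) * t ^ (δ - ((k+1:ℕ):ℝ)) := by push_cast; ring_nf

theorem forward_difference_bound_of_deriv_bound
    (δ : ℝ) (k : ℕ) (hk : 0 < k) (hδ : δ < k) (C : ℝ) (hC : 0 ≤ C)
    (f : ℝ → ℝ) (hf : ContDiffOn ℝ k f (Set.Ioi (0 : ℝ)))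
    (hbound : ∀ r > (0 : ℝ), |iteratedDerivWithin k f (Set.Ioi 0) r| ≤ C * r ^ (δ - (k : ℝ))) :
    ∀ t > (0 : ℝ), ∀ s > (0 : ℝ), |fdiff f k s t| ≤ C * s ^ k * t ^ (δ - (k : ℝ)) :=
  key k δ C hC hδ f hf hbound
end
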